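/- arXiv:2310.20179 — 5 statements merged into one kernel-verified Lean document; each statement's English description precedes it below -/
import Mathlib

section
/- Let s ≥ 1 be an integer, q = 2^s, m ≥ 3 an odd integer, and n = q^m − 1. Then for every integer i with 1 ≤ i ≤ n−1, i ∈ T_{(q,m;0)} if and only if n−i ∈ T_{(q,m;1)} (so −T_{(q,m;0)} = T_{(q,m;1)} modulo n), and |T_{(q,m;0)}| = |T_{(q,m;1)}| = (n−1)/2. -/
/-!
Write `n = q^m - 1`. If `i + j = n`, the base-`q` digits of `i` and `j` are complementary
(each pair of digits sums to `q - 1`), so `wt_q(i) + wt_q(j) = m (q - 1)`, which is odd when `q`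
is even and `m` is odd. Hence `i ↦ n - i` swaps `T_{(q,m;0)}` and `T_{(q,m;1)}`; these two sets
partition `{1, …, n - 1}`, so each has `(n - 1)/2` elements.
-/

/-- The `q`-weight of a nonnegative integer: the sum of its base-`q` digits. -/
def qWeight (q i : ℕ) : ℕ := (Nat.digits q i).sum

/-- The set `T_{(q,m;j)} = {i : 1 ≤ i ≤ q^m − 2, wt_q(i) ≡ j (mod 2)}` as a finset. -/
def Tset (q m j : ℕ) : Finset ℕ :=
  (Finset.Icc 1 (q ^ m - 2)).filter fun i => qWeight q i % 2 = j

lemma qWeight_add_mul {q : ℕ} (hq : 1 < q) {b : ℕ} (hb : b < q) (a : ℕ) :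
    qWeight q (b + q * a) = b + qWeight q a := by
  by_cases h : b = 0 ∧ a = 0
  · simp [h.1, h.2, qWeight]
  · rw [qWeight, Nat.digits_add q hq b a hb (by tauto), List.sum_cons, qWeight]

lemma qWeight_add_qWeight_of_add_add_one_eq_pow {q : ℕ} (hq : 1 < q) :
    ∀ {m i j : ℕ}, i + j + 1 = q ^ m → qWeight q i + qWeight q j = m * (q - 1)
  | 0, i, j, h => by
    obtain ⟨rfl, rfl⟩ : i = 0 ∧ j = 0 := by simp at h; omega
    simp [qWeight]
  | m + 1, i, j, h => by
    have hi : i % q + q * (i / q) = i := Nat.mod_add_div i q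
    have hb : i % q < q := Nat.mod_lt i (by omega)
    have ha : i / q < q ^ m := Nat.div_lt_of_lt_mul (by rw [← pow_succ']; omega)
    obtain ⟨c, hc⟩ := Nat.exists_eq_add_of_lt ha
    -- the low digit of `j` is `q - 1 - (i % q)` and the remaining digits are those of `c`
    have hpow : q ^ (m + 1) = q * (i / q) + q * c + q := by rw [pow_succ', hc]; ring
    have hj : j = (q - 1 - i % q) + q * c := by omega
    have ih := qWeight_add_qWeight_of_add_add_one_eq_pow hq (m := m) (i := i / q) (j := c)
      (by omega)
    rw [← hi, hj, qWeight_add_mul hq hb, qWeight_add_mul hq (by omega), add_one_mul]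
    omega

lemma qWeight_mod_two_eq_zero_iff {q m i j : ℕ} (hq : 1 < q) (hq_even : Even q) (hm : Odd m)
    (h : i + j + 1 = q ^ m) : qWeight q i % 2 = 0 ↔ qWeight q j % 2 = 1 := by
  have hsum := qWeight_add_qWeight_of_add_add_one_eq_pow hq h
  have hodd : Odd (m * (q - 1)) := hm.mul (Nat.Even.sub_odd (by omega) hq_even odd_one)
  rw [← hsum, Nat.odd_iff] at hodd
  omega

lemma mem_Tset_zero_iff {q m i : ℕ} (hq : 1 < q) (hq_even : Even q) (hm : Odd m)
    (hi : i ≤ q ^ m - 1) : i ∈ Tset q m 0 ↔ q ^ m - 1 - i ∈ Tset q m 1 := by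
  have hpos : 0 < q ^ m := by positivity
  simp only [Tset, Finset.mem_filter, Finset.mem_Icc,
    qWeight_mod_two_eq_zero_iff hq hq_even hm (i := i) (j := q ^ m - 1 - i) (by omega)]
  omega

lemma card_Tset_zero_eq_card_Tset_one {q m : ℕ} (hq : 1 < q) (hq_even : Even q) (hm : Odd m) :
    (Tset q m 0).card = (Tset q m 1).card := by
  have hle : ∀ {i j}, i ∈ Tset q m j → i ≤ q ^ m - 1 := fun hi => by
    simp only [Tset, Finset.mem_filter, Finset.mem_Icc] at hi; omega
  refine Finset.card_nbij' (q ^ m - 1 - ·) (q ^ m - 1 - ·) ?_ ?_ ?_ ?_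
  · exact fun i hi => (mem_Tset_zero_iff hq hq_even hm (hle hi)).mp hi
  · intro j hj
    have hj' := hle (Finset.mem_coe.mp hj)
    exact (mem_Tset_zero_iff hq hq_even hm (Nat.sub_le _ j)).mpr (by rwa [Nat.sub_sub_self hj'])
  · exact fun i hi => Nat.sub_sub_self (hle (Finset.mem_coe.mp hi))
  · exact fun j hj => Nat.sub_sub_self (hle (Finset.mem_coe.mp hj))

lemma card_Tset_zero_add_card_Tset_one (q m : ℕ) :
    (Tset q m 0).card + (Tset q m 1).card = q ^ m - 2 := by
  have hT1 : Tset q m 1 = (Finset.Icc 1 (q ^ m - 2)).filter fun i => ¬ qWeight q i % 2 = 0 :=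
    Finset.filter_congr fun i _ => by omega
  rw [hT1, Tset, Finset.card_filter_add_card_filter_not, Nat.card_Icc, Nat.add_sub_cancel]

theorem stmt0_general (s q m n : ℕ) (hs : 1 ≤ s) (hq : q = 2 ^ s)
    (hmodd : Odd m) (hn : n = q ^ m - 1) :
    (∀ i : ℕ, 1 ≤ i → i ≤ n - 1 → (i ∈ Tset q m 0 ↔ n - i ∈ Tset q m 1)) ∧
      (Tset q m 0).card = (n - 1) / 2 ∧ (Tset q m 1).card = (n - 1) / 2 := by
  have hq1 : 1 < q := hq ▸ Nat.one_lt_two_pow (by omega)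
  have hq_even : Even q := hq ▸ (Nat.even_pow' (by omega)).mpr even_two
  have hqm_even : Even (q ^ m) := (Nat.even_pow' hmodd.pos.ne').mpr hq_even
  have hcard := card_Tset_zero_eq_card_Tset_one hq1 hq_even hmodd
  have htotal := card_Tset_zero_add_card_Tset_one q m
  subst hn
  refine ⟨fun i _ hi => mem_Tset_zero_iff hq1 hq_even hmodd (by omega), ?_⟩
  obtain ⟨k, hk⟩ := hqm_even
  omega

theorem stmt0 (s q m n : ℕ) (hs : 1 ≤ s) (hq : q = 2 ^ s)
    (hm : 3 ≤ m) (hmodd : Odd m) (hn : n = q ^ m - 1) :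
    (∀ i : ℕ, 1 ≤ i → i ≤ n - 1 → (i ∈ Tset q m 0 ↔ n - i ∈ Tset q m 1)) ∧
      (Tset q m 0).card = (n - 1) / 2 ∧ (Tset q m 1).card = (n - 1) / 2 :=
  stmt0_general s q m n hs hq hmodd hn
end

section
/- Let s ≥ 1 be an integer and q = 2^s. Let m ≥ 2 and let ℓ be a positive integer such that m/gcd(ℓ, m) is odd. Then gcd(q^m − 1, q^ℓ + 1) = 1. -/
/-!
Let `d = gcd (q^m - 1, q^ℓ + 1)`. Since `q^ℓ + 1 ∣ q^(2ℓ) - 1`, `d` divides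
`gcd (q^m - 1, q^(2ℓ) - 1) = q^gcd(m, 2ℓ) - 1`. As `m / gcd(ℓ, m)` is odd, `gcd(2ℓ, m) = gcd(ℓ, m)`,
which divides `ℓ`, so `d ∣ q^ℓ - 1`. Together with `d ∣ q^ℓ + 1` this gives `d ∣ 2`,
and `d` is odd because `q` is even.
-/

namespace Nat

theorem gcd_two_mul_left_of_odd_div_gcd {ℓ m : ℕ} (hodd : Odd (m / gcd ℓ m)) :
    gcd (2 * ℓ) m = gcd ℓ m := by
  obtain rfl | hm := m.eq_zero_or_pos
  · simp at hodd
  set g := gcd ℓ m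
  have hcop : Coprime (2 * (ℓ / g)) (m / g) :=
    (coprime_two_left.mpr hodd).mul_left (coprime_div_gcd_div_gcd (gcd_pos_of_pos_right ℓ hm))
  calc gcd (2 * ℓ) m = gcd (g * (2 * (ℓ / g))) (g * (m / g)) := by
        rw [mul_left_comm, Nat.mul_div_cancel' (gcd_dvd_left ℓ m),
          Nat.mul_div_cancel' (gcd_dvd_right ℓ m)]
    _ = g := by rw [gcd_mul_left, hcop, mul_one]

theorem gcd_pow_sub_one_pow_add_one_dvd_two (a : ℕ) {ℓ m : ℕ} (hodd : Odd (m / gcd ℓ m)) :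
    gcd (a ^ m - 1) (a ^ ℓ + 1) ∣ 2 := by
  set d := gcd (a ^ m - 1) (a ^ ℓ + 1)
  have hsq : a ^ ℓ + 1 ∣ a ^ (2 * ℓ) - 1 :=
    ⟨a ^ ℓ - 1, by rw [mul_comm, pow_mul, ← one_pow 2, Nat.sq_sub_sq, one_pow]⟩
  have hsub : d ∣ a ^ ℓ - 1 := by
    have h : d ∣ a ^ gcd m (2 * ℓ) - 1 :=
      pow_sub_one_gcd_pow_sub_one a m (2 * ℓ) ▸ gcd_dvd_gcd_of_dvd_right _ hsq
    rw [gcd_comm, gcd_two_mul_left_of_odd_div_gcd hodd] at h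
    exact h.trans (pow_sub_one_dvd_pow_sub_one a (gcd_dvd_left ℓ m))
  have htwo : (a ^ ℓ + 1) - (a ^ ℓ - 1) ∣ 2 := by
    rcases (by omega : (a ^ ℓ + 1) - (a ^ ℓ - 1) = 1 ∨ (a ^ ℓ + 1) - (a ^ ℓ - 1) = 2)
      with h | h <;> simp [h]
  exact (Nat.dvd_sub (gcd_dvd_right _ _) hsub).trans htwo

end Nat

theorem stmt2_general (s q m ℓ : ℕ) (hs : 1 ≤ s) (hq : q = 2 ^ s)
    (hodd : Odd (m / Nat.gcd ℓ m)) :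
    Nat.gcd (q ^ m - 1) (q ^ ℓ + 1) = 1 := by
  have hm : m ≠ 0 := by rintro rfl; simp at hodd
  have hq_even : Even q := hq ▸ (Nat.even_pow' (by omega)).mpr even_two
  have hgcd_odd : Odd (Nat.gcd (q ^ m - 1) (q ^ ℓ + 1)) :=
    (Nat.Even.sub_odd (Nat.one_le_pow _ _ (hq ▸ by positivity)) ((Nat.even_pow' hm).mpr hq_even)
      odd_one).of_dvd_nat (Nat.gcd_dvd_left _ _)
  exact (Nat.coprime_two_right.mpr hgcd_odd).eq_one_of_dvd
    (Nat.gcd_pow_sub_one_pow_add_one_dvd_two q hodd)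

theorem stmt2 (s q m ℓ : ℕ) (hs : 1 ≤ s) (hq : q = 2 ^ s)
    (hm : 2 ≤ m) (hℓ : 1 ≤ ℓ) (hodd : Odd (m / Nat.gcd ℓ m)) :
    Nat.gcd (q ^ m - 1) (q ^ ℓ + 1) = 1 :=
  stmt2_general s q m ℓ hs hq hodd
end

section
/- Let m ≥ 2, let q ≥ 3 be an integer, let A be an integer with 2 ≤ A ≤ q−1, and let h be an integer with 0 ≤ h ≤ m−1. Then for every integer i with 0 ≤ i ≤ A·q^h − 1, wt_q(A·q^h − 1 − i) = (q−1)h + A − 1 − wt_q(i). -/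
theorem qWeight_of_lt {q n : ℕ} (hn : n < q) : qWeight q n = n := by
  rcases Nat.eq_zero_or_pos n with rfl | hn0
  · simp [qWeight]
  · simp [qWeight, Nat.digits_of_lt q n hn0.ne' hn]

theorem qWeight_mul_add {q a b : ℕ} (hq : 1 < q) (hb : b < q) :
    qWeight q (q * a + b) = b + qWeight q a := by
  rcases Nat.eq_zero_or_pos (q * a + b) with h0 | h0
  · obtain ⟨rfl, rfl⟩ : a = 0 ∧ b = 0 := by simp at h0; omega
    simp [qWeight]
  · have hmod : (q * a + b) % q = b := by rw [Nat.mul_add_mod, Nat.mod_eq_of_lt hb]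
    have hdiv : (q * a + b) / q = a := by
      rw [Nat.mul_add_div (by omega), Nat.div_eq_of_lt hb, Nat.add_zero]
    simp [qWeight, Nat.digits_def' hq h0, hmod, hdiv]

theorem qWeight_sub_add_qWeight {q A : ℕ} (hq : 1 < q) (hA : 0 < A) (hAq : A ≤ q) (h : ℕ)
    {i : ℕ} (hi : i < A * q ^ h) :
    qWeight q (A * q ^ h - 1 - i) + qWeight q i = (q - 1) * h + (A - 1) := by
  induction h generalizing i with
  | zero =>
    rw [pow_zero, mul_one] at hi ⊢
    rw [qWeight_of_lt (by omega), qWeight_of_lt (by omega)]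
    omega
  | succ n ih =>
    set N := A * q ^ n
    have hN : A * q ^ (n + 1) = q * N := by ring
    rw [hN] at hi ⊢
    obtain ⟨j, r, rfl, hr⟩ : ∃ j r, i = q * j + r ∧ r < q :=
      ⟨i / q, i % q, (Nat.div_add_mod i q).symm, Nat.mod_lt _ (by omega)⟩
    have hj : j < N := by
      by_contra! hNj
      have := Nat.mul_le_mul_left q hNj
      omega
    have hsplit : q * (N - 1 - j) + q * j + q = q * N := by
      rw [← mul_add, ← mul_add_one]
      congr 1
      omega
    have hcompl : q * N - 1 - (q * j + r) = q * (N - 1 - j) + (q - 1 - r) := by omega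
    rw [hcompl, qWeight_mul_add hq (by omega), qWeight_mul_add hq hr]
    have hih := ih hj
    rw [mul_add_one]
    omega

theorem stmt3_general (q A h : ℕ)
    (hA1 : 2 ≤ A) (hA2 : A ≤ q - 1) :
    ∀ i : ℕ, i ≤ A * q ^ h - 1 →
      qWeight q (A * q ^ h - 1 - i) = (q - 1) * h + A - 1 - qWeight q i := by
  intro i hi
  have hq : 1 < q := by omega
  have hpos : 0 < A * q ^ h := Nat.mul_pos (by omega) (pow_pos (by omega) h)
  have hsum := qWeight_sub_add_qWeight hq (by omega : 0 < A) (by omega) h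
    (show i < A * q ^ h by omega)
  omega

theorem stmt3 (q m A h : ℕ) (hm : 2 ≤ m) (hq : 3 ≤ q)
    (hA1 : 2 ≤ A) (hA2 : A ≤ q - 1) (hh : h ≤ m - 1) :
    ∀ i : ℕ, i ≤ A * q ^ h - 1 →
      qWeight q (A * q ^ h - 1 - i) = (q - 1) * h + A - 1 - qWeight q i :=
  stmt3_general q A h hA1 hA2
end

section
/- Let s ≥ 2 be an integer, q = 2^s, m ≥ 3 an odd integer, and n = q^m − 1. Let b = 2q^{m−1} and a = q^{(m−1)/2} + 1. Then gcd(a, n) = 1, and for every integer i with −(q−1) ≤ i ≤ q^{(m−1)/2} + q − 2, the residue (b + a·i) mod n belongs to T_{(q,m;0)}. -/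
theorem qWeight_add_pow_mul {q k x : ℕ} (hq : 1 < q) (hx : x < q ^ k) (y : ℕ) :
    qWeight q (x + q ^ k * y) = qWeight q x + qWeight q y := by
  rcases Nat.eq_zero_or_pos y with rfl | hy
  · simp [qWeight]
  obtain ⟨l, rfl⟩ : ∃ l, k = (q.digits x).length + l :=
    Nat.exists_eq_add_of_le ((Nat.digits_length_le_iff hq x).2 hx)
  simp [qWeight, ← Nat.digits_append_zeroes_append_digits hq hy]

theorem qWeight_of_lt_s4 {q x : ℕ} (hx : x < q) : qWeight q x = x := by
  rcases Nat.eq_zero_or_pos x with rfl | hx0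
  · simp [qWeight]
  · simp [qWeight, Nat.digits_of_lt q x hx0.ne' hx]

theorem qWeight_eq_qWeight_sub_one_add_one {q x : ℕ} (hq : 1 < q) (hx : ¬ q ∣ x) :
    qWeight q x = qWeight q (x - 1) + 1 := by
  have hlow : ∀ e < q, qWeight q (e + q * (x / q)) = e + qWeight q (x / q) := fun e he => by
    have := qWeight_add_pow_mul (k := 1) hq (by simpa using he) (x / q)
    rwa [pow_one, qWeight_of_lt_s4 he] at this
  have hd : x % q ≠ 0 := fun h => hx (Nat.dvd_of_mod_eq_zero h)
  have hdq : x % q < q := Nat.mod_lt x (by omega)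
  have hx' : x = x % q + q * (x / q) := (Nat.mod_add_div x q).symm
  rw [show x - 1 = (x % q - 1) + q * (x / q) by omega, hlow _ (by omega)]
  conv_lhs => rw [hx']
  rw [hlow _ hdq]
  omega

theorem isCoprime_pow_add_one_mul_pow_sub_one {q : ℤ} (hq : Even q) (t : ℕ) :
    IsCoprime (q ^ t + 1) (q * q ^ t * q ^ t - 1) := by
  obtain ⟨k, hk⟩ := hq
  have hQ : q ^ t + 1 = 2 + (q - 1) * ∑ i ∈ Finset.range t, q ^ i := by
    rw [mul_comm, geom_sum_mul]; ring
  have hn : q * q ^ t * q ^ t - 1 = (q - 1) + (q ^ t + 1) * (q * (q ^ t - 1)) := by ring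
  rw [hn, IsCoprime.add_mul_left_right_iff, isCoprime_comm, hQ, IsCoprime.add_mul_left_right_iff]
  exact ⟨-1, k, by rw [hk]; ring⟩

theorem two_mul_sq_add_mul_mem_Icc {q Q i : ℤ} (hq : 4 ≤ q) (hqQ : q ≤ Q)
    (hi₁ : -(q - 1) ≤ i) (hi₂ : i ≤ Q + q - 2) :
    2 * Q * Q + (Q + 1) * i ∈ Set.Icc 1 (q * Q * Q - 2) := by
  constructor
  · nlinarith [mul_le_mul_of_nonneg_left hi₁ (by linarith : 0 ≤ Q + 1)]
  · nlinarith [mul_le_mul_of_nonneg_left hi₂ (by linarith : 0 ≤ Q + 1),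
      mul_nonneg (mul_nonneg (by linarith : 0 ≤ q - 4) (by linarith : 0 ≤ Q)) (by linarith : 0 ≤ Q),
      mul_nonneg (by linarith : 0 ≤ Q - q) (by linarith : 0 ≤ Q + 1)]

theorem even_qWeight_of_cast_eq {q t : ℕ} (hq : 3 < q) (ht : 1 ≤ t) {i : ℤ}
    (hi₁ : -((q : ℤ) - 1) ≤ i) (hi₂ : i ≤ (q : ℤ) ^ t + q - 2) {N : ℕ}
    (hN : (N : ℤ) = 2 * (q : ℤ) ^ t * (q : ℤ) ^ t + ((q : ℤ) ^ t + 1) * i) :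
    Even (qWeight q N) := by
  have hq1 : 1 < q := by omega
  have hqQ : q ≤ q ^ t := Nat.le_self_pow (by omega) q
  have hsplit : ∀ x y z, x < q ^ t → y < q ^ t →
      qWeight q (x + q ^ t * (y + q ^ t * z)) = qWeight q x + qWeight q y + qWeight q z :=
    fun x y z hx hy => by
      rw [qWeight_add_pow_mul hq1 hx, qWeight_add_pow_mul hq1 hy, add_assoc]
  rcases lt_or_ge i 0 with hneg | hnonneg
  · obtain ⟨j, rfl⟩ : ∃ j : ℕ, i = -j := ⟨i.natAbs, by omega⟩
    have hj : j < q := by omega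
    have hN' : N = (q ^ t - j) + q ^ t * ((q ^ t - j - 1) + q ^ t * 1) := by
      zify [(by omega : j ≤ q ^ t), (by omega : 1 ≤ q ^ t - j)]
      linear_combination hN
    have hndvd : ¬ q ∣ q ^ t - j := fun h => by
      have := Nat.le_of_dvd (by omega) <|
        (Nat.dvd_sub_iff_right (by omega) (dvd_pow_self q (by omega : t ≠ 0))).mp h
      omega
    rw [hN', hsplit (q ^ t - j) (q ^ t - j - 1) 1 (by omega) (by omega),
      qWeight_eq_qWeight_sub_one_add_one hq1 hndvd, qWeight_of_lt_s4 hq1]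
    exact ⟨qWeight q (q ^ t - j - 1) + 1, by omega⟩
  obtain ⟨u, rfl⟩ : ∃ u : ℕ, i = u := ⟨i.toNat, by omega⟩
  rcases lt_or_ge u (q ^ t) with hu | hu
  · have hN' : N = u + q ^ t * (u + q ^ t * 2) := by
      zify
      linear_combination hN
    rw [hN', hsplit u u 2 hu hu, qWeight_of_lt_s4 (by omega : 2 < q)]
    exact ⟨qWeight q u + 1, by omega⟩
  · obtain ⟨r, rfl⟩ : ∃ r, u = q ^ t + r := Nat.exists_eq_add_of_le hu
    push_cast at hi₂ hN
    have hr : r + 1 < q := by omega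
    have hN' : N = r + q ^ t * ((r + 1) + q ^ t * 3) := by
      zify
      linear_combination hN
    rw [hN', hsplit r (r + 1) 3 (by omega) (by omega), qWeight_of_lt_s4 (by omega : r < q),
      qWeight_of_lt_s4 hr, qWeight_of_lt_s4 hq]
    exact ⟨r + 2, by omega⟩

theorem stmt4 (s q m n : ℕ) (hs : 2 ≤ s) (hq : q = 2 ^ s)
    (hm : 3 ≤ m) (hmodd : Odd m) (hn : n = q ^ m - 1)
    (b a : ℤ) (hb : b = 2 * (q : ℤ) ^ (m - 1)) (ha : a = (q : ℤ) ^ ((m - 1) / 2) + 1) :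
    Int.gcd a (n : ℤ) = 1 ∧
      ∀ i : ℤ, -((q : ℤ) - 1) ≤ i → i ≤ (q : ℤ) ^ ((m - 1) / 2) + (q : ℤ) - 2 →
        ((b + a * i) % (n : ℤ)).toNat ∈ Tset q m 0 := by
  obtain ⟨t, rfl⟩ := hmodd
  have hq4 : 4 ≤ q := hq ▸ (Nat.pow_le_pow_right two_pos hs : 2 ^ 2 ≤ 2 ^ s)
  have hpow : q ^ (2 * t + 1) = q * q ^ t * q ^ t := by ring
  have hn' : (n : ℤ) = q * (q : ℤ) ^ t * (q : ℤ) ^ t - 1 := by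
    rw [hn, hpow, Nat.cast_sub (Nat.one_le_iff_ne_zero.mpr (by simp; omega))]
    push_cast; ring
  have hb' : b = 2 * (q : ℤ) ^ t * (q : ℤ) ^ t := by
    rw [hb, show 2 * t + 1 - 1 = t + t by omega, pow_add]; ring
  simp only [show (2 * t + 1 - 1) / 2 = t by omega] at ha ⊢
  subst ha hb'
  refine ⟨?_, fun i hi₁ hi₂ => ?_⟩
  · rw [hn', ← Int.isCoprime_iff_gcd_eq_one]
    have hqeven : Even (q : ℤ) := by rw [hq]; push_cast; exact even_two.pow_of_ne_zero (by omega)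
    exact isCoprime_pow_add_one_mul_pow_sub_one hqeven t
  · have hqQ : (q : ℤ) ≤ (q : ℤ) ^ t := by exact_mod_cast Nat.le_self_pow (by omega) q
    obtain ⟨hv₁, hv₂⟩ := two_mul_sq_add_mul_mem_Icc (by exact_mod_cast hq4) hqQ hi₁ hi₂
    obtain ⟨N, hN⟩ : ∃ N : ℕ, (N : ℤ) = 2 * (q : ℤ) ^ t * (q : ℤ) ^ t + ((q : ℤ) ^ t + 1) * i :=
      ⟨_, Int.toNat_of_nonneg (by omega)⟩
    rw [← hN, Int.emod_eq_of_lt (by omega) (by omega), Int.toNat_natCast, Tset,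
      Finset.mem_filter, Finset.mem_Icc, ← Nat.even_iff]
    exact ⟨⟨by omega, by omega⟩, even_qWeight_of_cast_eq (by omega) (by omega) hi₁ hi₂ hN⟩
end

section
/- Let s ≥ 2 be an integer, q = 2^s, m = 6, and n = q^6 − 1. Let b = q^5 + q and a = (q^6 − 1)/(q − 1) − q^4 − 1. Then gcd(a, n) = 1, and for every integer i with −(q^2 − q) ≤ i ≤ q^2 − q, the residue (b + a·i) mod n belongs to T_{(q,m;0)}. -/
theorem Nat.ofDigits_replicate_sub_one (b m : ℕ) :
    Nat.ofDigits b (List.replicate m (b - 1)) = b ^ m - 1 := by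
  induction m with
  | zero => simp
  | succ m ih =>
    rw [List.replicate_succ, Nat.ofDigits_cons, ih]
    rcases Nat.eq_zero_or_pos b with rfl | hb
    · simp
    · zify [hb, Nat.one_le_pow m b hb, Nat.one_le_pow (m + 1) b hb]
      ring

theorem mem_Tset_of_modEq_ofDigits {q m j : ℕ} (hq : 1 < q) {L : List ℕ} (hlen : L.length = m)
    (hdig : ∀ d ∈ L, d < q) (hfull : L ≠ List.replicate m (q - 1)) (hsum : L.sum ≠ 0)
    (hpar : L.sum % 2 = j) {x : ℤ} (hx : x ≡ (Nat.ofDigits q L : ℕ) [ZMOD (q : ℤ) ^ m - 1]) :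
    (x % ((q : ℤ) ^ m - 1)).toNat ∈ Tset q m j := by
  set v := Nat.ofDigits q L
  have hweight : qWeight q v = L.sum := Nat.sum_digits_ofDigits_eq_sum hq ⟨rfl, hdig⟩
  have hv0 : v ≠ 0 := fun h => hsum (by rw [← hweight, h, qWeight, Nat.digits_zero, List.sum_nil])
  have hvlt : v < q ^ m := hlen ▸ Nat.ofDigits_lt_base_pow_length hq hdig
  have hvne : v ≠ q ^ m - 1 := fun h => hfull <| Nat.ofDigits_inj_of_len_eq hq (by simp [hlen])
    hdig (fun d hd => by rw [List.eq_of_mem_replicate hd]; omega)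
    (by rw [Nat.ofDigits_replicate_sub_one, ← h])
  have hv : (v : ℤ) + 1 < (q : ℤ) ^ m := by exact_mod_cast (by omega : v + 1 < q ^ m)
  rw [hx, Int.emod_eq_of_lt (by positivity) (by linarith), Int.toNat_natCast, Tset,
    Finset.mem_filter, Finset.mem_Icc, hweight]
  omega

/-- `b + a i`, with `a = (q^6 - 1)/(q - 1) - q^4 - 1` written out as `q^5 + q^3 + q^2 + q`. -/
def affineTerm (q : ℕ) (i : ℤ) : ℤ := (q ^ 5 + q) + (q ^ 5 + q ^ 3 + q ^ 2 + q) * i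

section Digits

variable {q : ℕ}

theorem mem_Tset_affineTerm_of_no_carry (hq : 3 ≤ q) {i₀ i₁ : ℕ} (h₀ : i₀ + 1 < q)
    (h₀₁ : i₀ + i₁ < q) :
    (affineTerm q (q * i₁ + i₀) % ((q : ℤ) ^ 6 - 1)).toNat ∈ Tset q 6 0 :=
  mem_Tset_of_modEq_ofDigits (L := [i₁, i₀ + 1, i₀ + i₁, i₀ + i₁, i₁, i₀ + 1]) (by omega) (by rfl)
    (by simp only [List.mem_cons, List.not_mem_nil, or_false, forall_eq_or_imp, forall_eq]; omega)
    (by simp only [List.replicate, ne_eq, List.cons.injEq, and_true]; omega)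
    (by simp only [List.sum_cons, List.sum_nil]; omega)
    (by simp only [List.sum_cons, List.sum_nil]; omega)
    (Int.modEq_iff_dvd.mpr ⟨-i₁, by push_cast [affineTerm, Nat.ofDigits]; ring⟩)

theorem mem_Tset_affineTerm_of_carry {i₀ i₁ : ℕ} (h₀ : i₀ + 1 < q) (h₁ : i₁ + 1 < q)
    (h₀₁ : q ≤ i₀ + i₁) :
    (affineTerm q (q * i₁ + i₀) % ((q : ℤ) ^ 6 - 1)).toNat ∈ Tset q 6 0 :=
  mem_Tset_of_modEq_ofDigits
    (L := [i₁, i₀ + 1, i₀ + i₁ - q, i₀ + i₁ - q + 1, i₁ + 1, i₀ + 1]) (by omega) (by rfl)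
    (by simp only [List.mem_cons, List.not_mem_nil, or_false, forall_eq_or_imp, forall_eq]; omega)
    (by simp only [List.replicate, ne_eq, List.cons.injEq, and_true]; omega)
    (by simp only [List.sum_cons, List.sum_nil]; omega)
    (by simp only [List.sum_cons, List.sum_nil]; omega)
    (Int.modEq_iff_dvd.mpr ⟨-i₁, by push_cast (disch := omega) [affineTerm, Nat.ofDigits]; ring⟩)

theorem mem_Tset_affineTerm_of_top_digit {i₀ i₁ : ℕ} (h₀ : i₀ + 1 = q) (h₁ : i₁ + 1 < q) :
    (affineTerm q (q * i₁ + i₀) % ((q : ℤ) ^ 6 - 1)).toNat ∈ Tset q 6 0 :=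
  mem_Tset_of_modEq_ofDigits (L := [i₁ + 1, 0, i₁, i₁, i₁ + 1, 0]) (by omega) (by rfl)
    (by simp only [List.mem_cons, List.not_mem_nil, or_false, forall_eq_or_imp, forall_eq]; omega)
    (by simp only [List.replicate, ne_eq, List.cons.injEq, and_true]; omega)
    (by simp only [List.sum_cons, List.sum_nil]; omega)
    (by simp only [List.sum_cons, List.sum_nil]; omega)
    (Int.modEq_iff_dvd.mpr ⟨-(i₁ + 1), by subst h₀; push_cast [affineTerm, Nat.ofDigits]; ring⟩)

theorem mem_Tset_affineTerm_neg_of_no_borrow {j₀ j₁ : ℕ} (h₀ : 1 ≤ j₀) (h₀₁ : j₀ + j₁ < q) :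
    (affineTerm q (-(q * j₁ + j₀)) % ((q : ℤ) ^ 6 - 1)).toNat ∈ Tset q 6 0 :=
  mem_Tset_of_modEq_ofDigits
    (L := [q - 1 - j₁, q - j₀, q - 1 - (j₀ + j₁), q - 1 - (j₀ + j₁), q - 1 - j₁, q - j₀])
    (by omega) (by rfl)
    (by simp only [List.mem_cons, List.not_mem_nil, or_false, forall_eq_or_imp, forall_eq]; omega)
    (by simp only [List.replicate, ne_eq, List.cons.injEq, and_true]; omega)
    (by simp only [List.sum_cons, List.sum_nil]; omega)
    (by simp only [List.sum_cons, List.sum_nil]; omega)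
    (Int.modEq_iff_dvd.mpr ⟨j₁ + 1, by push_cast (disch := omega) [affineTerm, Nat.ofDigits]; ring⟩)

theorem mem_Tset_affineTerm_neg_of_borrow {j₀ j₁ : ℕ} (h₀ : j₀ < q) (h₁ : j₁ + 1 < q)
    (h₀₁ : q ≤ j₀ + j₁) :
    (affineTerm q (-(q * j₁ + j₀)) % ((q : ℤ) ^ 6 - 1)).toNat ∈ Tset q 6 0 :=
  mem_Tset_of_modEq_ofDigits (L := [q - 1 - j₁, q - j₀, 2 * q - 1 - (j₀ + j₁),
      2 * q - 2 - (j₀ + j₁), q - 2 - j₁, q - j₀]) (by omega) (by rfl)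
    (by simp only [List.mem_cons, List.not_mem_nil, or_false, forall_eq_or_imp, forall_eq]; omega)
    (by simp only [List.replicate, ne_eq, List.cons.injEq, and_true]; omega)
    (by simp only [List.sum_cons, List.sum_nil]; omega)
    (by simp only [List.sum_cons, List.sum_nil]; omega)
    (Int.modEq_iff_dvd.mpr ⟨j₁ + 1, by push_cast (disch := omega) [affineTerm, Nat.ofDigits]; ring⟩)

theorem mem_Tset_affineTerm_neg_of_zero_digit {j₁ : ℕ} (h₁ : 1 ≤ j₁) (h₁' : j₁ < q) :
    (affineTerm q (-(q * j₁)) % ((q : ℤ) ^ 6 - 1)).toNat ∈ Tset q 6 0 :=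
  mem_Tset_of_modEq_ofDigits (L := [q - j₁, 0, q - j₁, q - 1 - j₁, q - 1 - j₁, 0])
    (by omega) (by rfl)
    (by simp only [List.mem_cons, List.not_mem_nil, or_false, forall_eq_or_imp, forall_eq]; omega)
    (by simp only [List.replicate, ne_eq, List.cons.injEq, and_true]; omega)
    (by simp only [List.sum_cons, List.sum_nil]; omega)
    (by simp only [List.sum_cons, List.sum_nil]; omega)
    (Int.modEq_iff_dvd.mpr ⟨j₁, by push_cast (disch := omega) [affineTerm, Nat.ofDigits]; ring⟩)

theorem exists_eq_mul_add_of_add_le_mul (hq : 0 < q) {k : ℕ} (hk : k + q ≤ q * q) :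
    ∃ i₀ i₁, k = q * i₁ + i₀ ∧ i₀ < q ∧ (i₁ + 1 < q ∨ i₁ + 1 = q ∧ i₀ = 0) := by
  refine ⟨k % q, k / q, (Nat.div_add_mod k q).symm, Nat.mod_lt _ hq, ?_⟩
  have hk' : q * (k / q + 1) + k % q ≤ q * q := by linarith [Nat.div_add_mod k q]
  have hle : k / q + 1 ≤ q := Nat.le_of_mul_le_mul_left ((Nat.le_add_right _ _).trans hk') hq
  rcases hle.lt_or_eq with h | h
  · exact .inl h
  · rw [h] at hk'
    exact .inr ⟨h, by omega⟩

theorem mem_Tset_affineTerm_natCast (hq : 3 ≤ q) {k : ℕ} (hk : k + q ≤ q * q) :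
    (affineTerm q k % ((q : ℤ) ^ 6 - 1)).toNat ∈ Tset q 6 0 := by
  obtain ⟨i₀, i₁, rfl, h₀, h₁⟩ := exists_eq_mul_add_of_add_le_mul (by omega) hk
  push_cast
  by_cases htop : i₀ + 1 = q
  · exact mem_Tset_affineTerm_of_top_digit htop (by omega)
  by_cases hsum : i₀ + i₁ < q
  · exact mem_Tset_affineTerm_of_no_carry hq (by omega) hsum
  · exact mem_Tset_affineTerm_of_carry (by omega) (by omega) (by omega)

theorem mem_Tset_affineTerm_neg_natCast {j : ℕ} (hj : 1 ≤ j) (hjq : j + q ≤ q * q) :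
    (affineTerm q (-j) % ((q : ℤ) ^ 6 - 1)).toNat ∈ Tset q 6 0 := by
  obtain ⟨j₀, j₁, rfl, h₀, h₁⟩ := exists_eq_mul_add_of_add_le_mul (by nlinarith) hjq
  push_cast
  by_cases hzero : j₀ = 0
  · subst hzero
    rw [Nat.cast_zero, add_zero]
    exact mem_Tset_affineTerm_neg_of_zero_digit
      (Nat.pos_of_ne_zero fun h => by simp [h] at hj) (by omega)
  by_cases hsum : j₀ + j₁ < q
  · exact mem_Tset_affineTerm_neg_of_no_borrow (by omega) hsum
  · exact mem_Tset_affineTerm_neg_of_borrow h₀ (by omega) (by omega)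

theorem mem_Tset_affineTerm (hq : 3 ≤ q) {i : ℤ} (hlo : -((q : ℤ) ^ 2 - q) ≤ i)
    (hhi : i ≤ (q : ℤ) ^ 2 - q) : (affineTerm q i % ((q : ℤ) ^ 6 - 1)).toNat ∈ Tset q 6 0 := by
  obtain ⟨k, rfl | rfl⟩ := Int.eq_nat_or_neg i
  · exact mem_Tset_affineTerm_natCast hq (by zify; linarith)
  · rcases Nat.eq_zero_or_pos k with rfl | hk
    · exact mem_Tset_affineTerm_natCast hq (by nlinarith)
    · exact mem_Tset_affineTerm_neg_natCast hk (by zify; linarith)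

end Digits

theorem isCoprime_pow_six_sub_one_of_even {q : ℤ} (hq : Even q) :
    IsCoprime (q ^ 5 + q ^ 3 + q ^ 2 + q) (q ^ 6 - 1) := by
  have h₁ : IsCoprime (q ^ 5 + q ^ 3 + q ^ 2 + q) (q - 1) := by
    rw [show q ^ 5 + q ^ 3 + q ^ 2 + q = 2 ^ 2 + (q - 1) * (q ^ 4 + q ^ 3 + 2 * q ^ 2 + 3 * q + 4)
      by ring, IsCoprime.add_mul_left_left_iff]
    exact (Int.isCoprime_two_left.mpr (hq.sub_odd odd_one)).pow_left
  have h₂ : IsCoprime (q ^ 5 + q ^ 3 + q ^ 2 + q) (q + 1) := by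
    rw [show q ^ 5 + q ^ 3 + q ^ 2 + q = -2 + (q + 1) * (q ^ 4 - q ^ 3 + 2 * q ^ 2 - q + 2)
      by ring, IsCoprime.add_mul_left_left_iff, IsCoprime.neg_left_iff]
    exact Int.isCoprime_two_left.mpr (hq.add_odd odd_one)
  have h₃ : IsCoprime (q ^ 5 + q ^ 3 + q ^ 2 + q) (q ^ 4 + q ^ 2 + 1) := by
    rw [show q ^ 5 + q ^ 3 + q ^ 2 + q = q ^ 2 + (q ^ 4 + q ^ 2 + 1) * q by ring,
      IsCoprime.add_mul_left_left_iff]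
    exact ⟨-(q ^ 2 + 1), 1, by ring⟩
  rw [show q ^ 6 - 1 = (q - 1) * (q + 1) * (q ^ 4 + q ^ 2 + 1) by ring]
  exact (h₁.mul_right h₂).mul_right h₃

theorem pow_six_sub_one_ediv_sub_one {q : ℤ} (hq : q ≠ 1) :
    (q ^ 6 - 1) / (q - 1) = q ^ 5 + q ^ 4 + q ^ 3 + q ^ 2 + q + 1 := by
  rw [show q ^ 6 - 1 = (q - 1) * (q ^ 5 + q ^ 4 + q ^ 3 + q ^ 2 + q + 1) by ring,
    Int.mul_ediv_cancel_left _ (sub_ne_zero.mpr hq)]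

theorem stmt7 (s q n : ℕ) (hs : 2 ≤ s) (hq : q = 2 ^ s) (hn : n = q ^ 6 - 1)
    (b a : ℤ) (hb : b = (q : ℤ) ^ 5 + (q : ℤ))
    (ha : a = ((q : ℤ) ^ 6 - 1) / ((q : ℤ) - 1) - (q : ℤ) ^ 4 - 1) :
    Int.gcd a (n : ℤ) = 1 ∧
      ∀ i : ℤ, -((q : ℤ) ^ 2 - (q : ℤ)) ≤ i → i ≤ (q : ℤ) ^ 2 - (q : ℤ) →
        ((b + a * i) % (n : ℤ)).toNat ∈ Tset q 6 0 := by
  have hq4 : 4 ≤ q := hq ▸ Nat.pow_le_pow_right two_pos hs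
  have heven : Even (q : ℤ) := by
    rw [hq, Nat.cast_pow, Nat.cast_ofNat]
    exact (Int.even_pow' (by omega)).mpr even_two
  have ha' : a = (q : ℤ) ^ 5 + (q : ℤ) ^ 3 + (q : ℤ) ^ 2 + q := by
    rw [ha, pow_six_sub_one_ediv_sub_one (by norm_cast; omega)]
    ring
  have hn' : (n : ℤ) = (q : ℤ) ^ 6 - 1 := by
    rw [hn, Nat.cast_sub (Nat.one_le_pow _ _ (by omega)), Nat.cast_pow, Nat.cast_one]
  rw [ha', hn']
  exact ⟨Int.isCoprime_iff_gcd_eq_one.mp (isCoprime_pow_six_sub_one_of_even heven),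
    fun i hlo hhi => hb ▸ mem_Tset_affineTerm (by omega) hlo hhi⟩
end
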